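/- arXiv:1806.05546 — 3 statements merged into one kernel-verified Lean document; each statement's English description precedes it below -/
import Mathlib

section
/- Let WF iterates be defined by f_{τ+1} = f_τ − μ̄·G(f_τ) starting from an arbitrary f_0 ∈ ℂ^N, where μ̄ = 1/λmax(A^H A) and G is the generalized gradient of the amplitude loss L. Then the norm of the generalized gradient along the iterates tends to zero: lim_{τ→∞} ‖G(f_τ)‖₂ = 0. -/
/-!
Each step is a majorize–minimize step. Freezing the phases of `A g` at those of `A f` gives the
least-squares majorant `g ↦ ‖A g - b ⊙ sgn(A f)‖² + const` of the amplitude loss, tight at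
`g = f` and with gradient `G(f)` there. Since `‖A‖² = λmax`, the gradient step of length `1/λmax`
lowers this majorant, hence the loss, by at least `‖G(f)‖²/λmax`. The loss is nonnegative, so
these decreases are summable and `‖G(f_τ)‖ → 0`.
-/

open scoped BigOperators
open Matrix

noncomputable section

namespace AWF

/-- Complex signum: `z/|z|` for `z ≠ 0`, and `0` at `0`. -/
def csgn (z : ℂ) : ℂ := if z = 0 then 0 else z / ((‖z‖ : ℝ) : ℂ)

variable {M N : ℕ}

/-- Amplitude loss `L(f) = ∑ (b_m − |(Af)_m|)²`. -/
def ampLoss (A : Matrix (Fin M) (Fin N) ℂ) (b : Fin M → ℝ) (f : Fin N → ℂ) : ℝ :=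
  ∑ m, (b m - ‖A.mulVec f m‖) ^ 2

/-- Generalized (Wirtinger) gradient `G(f) = Aᴴ(Af − b ⊙ sgn(Af))`. -/
def wGrad (A : Matrix (Fin M) (Fin N) ℂ) (b : Fin M → ℝ) (f : Fin N → ℂ) : Fin N → ℂ :=
  Aᴴ.mulVec (fun m => A.mulVec f m - (b m : ℂ) * csgn (A.mulVec f m))

/-- Euclidean (ℓ₂) norm of a complex vector. -/
def norm2 {n : ℕ} (v : Fin n → ℂ) : ℝ := Real.sqrt (∑ i, ‖v i‖ ^ 2)

/-- The largest eigenvalue of the positive semidefinite Hermitian matrix `Aᴴ A`. -/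
def lamMax (A : Matrix (Fin M) (Fin N) ℂ) : ℝ :=
  ⨆ i, (Matrix.isHermitian_conjTranspose_mul_self A).eigenvalues i

end AWF

open scoped ComplexOrder

section

variable {𝕜 : Type*} [RCLike 𝕜] {m n : Type*} [Fintype m] [Fintype n]

theorem Matrix.re_star_dotProduct_self (v : n → 𝕜) :
    RCLike.re (star v ⬝ᵥ v) = ∑ i, ‖v i‖ ^ 2 := by
  simp only [dotProduct, Pi.star_apply, RCLike.star_def, RCLike.conj_mul, map_sum]
  norm_cast

theorem Matrix.sum_norm_sq_mulVec (A : Matrix m n 𝕜) (v : n → 𝕜) :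
    ∑ i, ‖(A *ᵥ v) i‖ ^ 2 = RCLike.re (star v ⬝ᵥ ((Aᴴ * A) *ᵥ v)) := by
  rw [← re_star_dotProduct_self, ← mulVec_mulVec, dotProduct_mulVec (star v) Aᴴ, ← star_mulVec]

theorem Matrix.sum_norm_sq_sub_smul (x y : n → 𝕜) (μ : ℝ) :
    ∑ i, ‖(x - μ • y) i‖ ^ 2 =
      ∑ i, ‖x i‖ ^ 2 - 2 * μ * RCLike.re (star x ⬝ᵥ y) + μ ^ 2 * ∑ i, ‖y i‖ ^ 2 := by
  have h := norm_sub_sq (𝕜 := 𝕜) (WithLp.toLp 2 x) (WithLp.toLp 2 (μ • y))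
  simp only [← WithLp.toLp_sub, EuclideanSpace.norm_sq_eq, EuclideanSpace.inner_toLp_toLp] at h
  simp only [h, smul_dotProduct, dotProduct_comm y, RCLike.smul_re, Pi.smul_apply, norm_smul,
    Real.norm_eq_abs, mul_pow, sq_abs, Finset.mul_sum]
  ring

theorem Matrix.IsHermitian.posSemidef_smul_one_sub [DecidableEq n] {A : Matrix n n 𝕜}
    (hA : A.IsHermitian) {c : ℝ} (hc : ∀ i, hA.eigenvalues i ≤ c) :
    ((c : 𝕜) • 1 - A).PosSemidef := by
  have hdiag : diagonal (RCLike.ofReal ∘ fun i => c - hA.eigenvalues i) =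
      (c : 𝕜) • (1 : Matrix n n 𝕜) - diagonal (RCLike.ofReal ∘ hA.eigenvalues) := by
    ext i j
    by_cases h : i = j <;> simp [h, Algebra.algebraMap_eq_smul_one, sub_smul]
  have hconj : (c : 𝕜) • 1 - A = Unitary.conjStarAlgAut 𝕜 _ hA.eigenvectorUnitary
      (diagonal (RCLike.ofReal ∘ fun i => c - hA.eigenvalues i)) := by
    conv_lhs => rw [hA.spectral_theorem]
    rw [hdiag, map_sub, map_smul, map_one]
  rw [hconj, Unitary.conjStarAlgAut_apply,
    Unitary.isUnit_coe.posSemidef_star_right_conjugate_iff, posSemidef_diagonal_iff]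
  intro i
  simpa using hc i

theorem Matrix.IsHermitian.re_dotProduct_mulVec_le [DecidableEq n] {A : Matrix n n 𝕜}
    (hA : A.IsHermitian) {c : ℝ} (hc : ∀ i, hA.eigenvalues i ≤ c) (v : n → 𝕜) :
    RCLike.re (star v ⬝ᵥ (A *ᵥ v)) ≤ c * ∑ i, ‖v i‖ ^ 2 := by
  have h := (hA.posSemidef_smul_one_sub hc).re_dotProduct_nonneg v
  rw [sub_mulVec, smul_mulVec, one_mulVec, dotProduct_sub, dotProduct_smul, map_sub, smul_eq_mul,
    RCLike.re_ofReal_mul, re_star_dotProduct_self] at h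
  linarith

/-- A gradient step of length `μ ≤ 1/L` on `g ↦ ‖A g - c‖²`, written for the residual `r = A g - c`,
where `L` bounds `‖A‖²`. -/
theorem Matrix.sum_norm_sq_sub_smul_mulVec_conjTranspose_le (A : Matrix m n 𝕜) {L μ : ℝ}
    (hA : ∀ v, ∑ i, ‖(A *ᵥ v) i‖ ^ 2 ≤ L * ∑ j, ‖v j‖ ^ 2) (hμ : 0 ≤ μ) (hμL : μ * L ≤ 1)
    (r : m → 𝕜) :
    ∑ i, ‖(r - μ • (A *ᵥ (Aᴴ *ᵥ r))) i‖ ^ 2 ≤ ∑ i, ‖r i‖ ^ 2 - μ * ∑ j, ‖(Aᴴ *ᵥ r) j‖ ^ 2 := by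
  have hcross : RCLike.re (star r ⬝ᵥ (A *ᵥ (Aᴴ *ᵥ r))) = ∑ j, ‖(Aᴴ *ᵥ r) j‖ ^ 2 := by
    rw [sum_norm_sq_mulVec, conjTranspose_conjTranspose, mulVec_mulVec]
  have hquad : μ ^ 2 * ∑ i, ‖(A *ᵥ (Aᴴ *ᵥ r)) i‖ ^ 2 ≤ μ * ∑ j, ‖(Aᴴ *ᵥ r) j‖ ^ 2 :=
    calc μ ^ 2 * ∑ i, ‖(A *ᵥ (Aᴴ *ᵥ r)) i‖ ^ 2
        ≤ μ ^ 2 * (L * ∑ j, ‖(Aᴴ *ᵥ r) j‖ ^ 2) := by gcongr; exact hA _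
      _ = μ * (μ * L) * ∑ j, ‖(Aᴴ *ᵥ r) j‖ ^ 2 := by ring
      _ ≤ μ * 1 * ∑ j, ‖(Aᴴ *ᵥ r) j‖ ^ 2 := by gcongr
      _ = μ * ∑ j, ‖(Aᴴ *ᵥ r) j‖ ^ 2 := by rw [mul_one]
  rw [sum_norm_sq_sub_smul, hcross]
  linarith

end

theorem sq_sub_norm_le_norm_sub_sq_add {F : Type*} [NormedAddCommGroup F] [InnerProductSpace ℝ F]
    {b : ℝ} {c : F} (hc : ‖c‖ ≤ b) (z : F) :
    (b - ‖z‖) ^ 2 ≤ ‖z - c‖ ^ 2 + (b ^ 2 - ‖c‖ ^ 2) := by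
  rw [norm_sub_sq_real]
  nlinarith [real_inner_le_norm z c, mul_le_mul_of_nonneg_left hc (norm_nonneg z)]

theorem summable_of_le_sub_succ {a s : ℕ → ℝ} (ha : ∀ τ, 0 ≤ a τ) (hs : ∀ τ, 0 ≤ s τ)
    (h : ∀ τ, s τ ≤ a τ - a (τ + 1)) : Summable s := by
  refine summable_of_sum_range_le hs (c := a 0) fun k => ?_
  have htel : ∑ τ ∈ Finset.range k, s τ ≤ a 0 - a k := by
    induction k with
    | zero => simp
    | succ k ih => rw [Finset.sum_range_succ]; linarith [h k]
  linarith [ha k]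

namespace AWF

theorem norm_csgn_le (z : ℂ) : ‖csgn z‖ ≤ 1 := by
  by_cases hz : z = 0
  · simp [csgn, hz]
  · rw [csgn, if_neg hz, norm_div, Complex.norm_real, norm_norm, div_self (norm_ne_zero_iff.2 hz)]

theorem inner_csgn (z : ℂ) : inner ℝ z (csgn z) = ‖z‖ := by
  by_cases hz : z = 0
  · simp [csgn, hz]
  · have hz' : (‖z‖ : ℂ) ≠ 0 := by exact_mod_cast norm_ne_zero_iff.2 hz
    rw [csgn, if_neg hz, Complex.inner, div_mul_eq_mul_div, Complex.mul_conj,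
      Complex.normSq_eq_norm_sq, Complex.ofReal_pow, sq, mul_div_cancel_right₀ _ hz',
      Complex.ofReal_re]

theorem sq_sub_norm_eq_csgn (b : ℝ) (z : ℂ) :
    (b - ‖z‖) ^ 2 = ‖z - b * csgn z‖ ^ 2 + (b ^ 2 - ‖(b : ℂ) * csgn z‖ ^ 2) := by
  rw [norm_sub_sq_real, ← Complex.real_smul, real_inner_smul_right, inner_csgn]
  ring

variable {M N : ℕ} (A : Matrix (Fin M) (Fin N) ℂ) (b : Fin M → ℝ)

theorem ampLoss_nonneg (g : Fin N → ℂ) : 0 ≤ ampLoss A b g :=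
  Finset.sum_nonneg fun _ _ => sq_nonneg _

def phasedTarget (f : Fin N → ℂ) : Fin M → ℂ := fun m => (b m : ℂ) * csgn ((A *ᵥ f) m)

theorem wGrad_eq (f : Fin N → ℂ) : wGrad A b f = Aᴴ *ᵥ (A *ᵥ f - phasedTarget A b f) := rfl

theorem norm_phasedTarget_le {b : Fin M → ℝ} (hb : ∀ m, 0 ≤ b m) (f : Fin N → ℂ) (m : Fin M) :
    ‖phasedTarget A b f m‖ ≤ b m := by
  rw [phasedTarget, norm_mul, Complex.norm_real, Real.norm_of_nonneg (hb m)]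
  exact mul_le_of_le_one_right (hb m) (norm_csgn_le _)

theorem ampLoss_le_of_norm_le {c : Fin M → ℂ} (hc : ∀ m, ‖c m‖ ≤ b m) (g : Fin N → ℂ) :
    ampLoss A b g ≤ ∑ m, ‖(A *ᵥ g - c) m‖ ^ 2 + ∑ m, (b m ^ 2 - ‖c m‖ ^ 2) := by
  rw [ampLoss, ← Finset.sum_add_distrib]
  exact Finset.sum_le_sum fun m _ => sq_sub_norm_le_norm_sub_sq_add (hc m) _

theorem ampLoss_eq (f : Fin N → ℂ) :
    ampLoss A b f = ∑ m, ‖(A *ᵥ f - phasedTarget A b f) m‖ ^ 2 +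
      ∑ m, (b m ^ 2 - ‖phasedTarget A b f m‖ ^ 2) := by
  rw [ampLoss, ← Finset.sum_add_distrib]
  exact Finset.sum_congr rfl fun m _ => sq_sub_norm_eq_csgn _ _

theorem sum_norm_sq_mulVec_le_lamMax (v : Fin N → ℂ) :
    ∑ m, ‖(A *ᵥ v) m‖ ^ 2 ≤ lamMax A * ∑ n, ‖v n‖ ^ 2 := by
  rw [sum_norm_sq_mulVec]
  exact (isHermitian_conjTranspose_mul_self A).re_dotProduct_mulVec_le
    (fun i => le_ciSup (Set.finite_range _).bddAbove i) v

theorem ampLoss_sub_smul_wGrad_le {b : Fin M → ℝ} (hb : ∀ m, 0 ≤ b m) (hpos : 0 < lamMax A)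
    (f : Fin N → ℂ) :
    ampLoss A b (f - (1 / lamMax A) • wGrad A b f) ≤
      ampLoss A b f - 1 / lamMax A * ∑ n, ‖wGrad A b f n‖ ^ 2 := by
  set c := phasedTarget A b f
  have hres : A *ᵥ (f - (1 / lamMax A) • wGrad A b f) - c =
      (A *ᵥ f - c) - (1 / lamMax A) • (A *ᵥ (Aᴴ *ᵥ (A *ᵥ f - c))) := by
    rw [mulVec_sub, mulVec_smul, wGrad_eq]
    abel
  have hstep := sum_norm_sq_sub_smul_mulVec_conjTranspose_le A (sum_norm_sq_mulVec_le_lamMax A)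
    (by positivity) (one_div_mul_cancel hpos.ne').le (A *ᵥ f - c)
  have hmaj := ampLoss_le_of_norm_le A b (norm_phasedTarget_le A hb f)
    (f - (1 / lamMax A) • wGrad A b f)
  rw [hres, ← wGrad_eq] at hmaj
  rw [← wGrad_eq] at hstep
  linarith [ampLoss_eq A b f]

theorem wf_grad_norm_tendsto_zero_general
    {M N : ℕ} (A : Matrix (Fin M) (Fin N) ℂ) (b : Fin M → ℝ) (hb : ∀ m, 0 ≤ b m)
    (hpos : 0 < lamMax A)
    (f : ℕ → Fin N → ℂ)
    (hiter : ∀ τ, f (τ + 1) = f τ - (1 / lamMax A) • wGrad A b (f τ)) :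
    Filter.Tendsto (fun τ => norm2 (wGrad A b (f τ))) Filter.atTop (nhds 0) := by
  have hdecrease : Summable fun τ => 1 / lamMax A * ∑ n, ‖wGrad A b (f τ) n‖ ^ 2 :=
    summable_of_le_sub_succ (a := fun τ => ampLoss A b (f τ)) (fun τ => ampLoss_nonneg A b _)
      (fun τ => by positivity)
      (fun τ => by linarith [hiter τ ▸ ampLoss_sub_smul_wGrad_le A hb hpos (f τ)])
  have hsq := ((summable_mul_left_iff (by positivity)).1 hdecrease).tendsto_atTop_zero
  simpa [norm2, Function.comp_def] using (Real.continuous_sqrt.tendsto 0).comp hsq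

/-- WF iterates `f_{τ+1} = f_τ − μ̄ G(f_τ)` with `μ̄ = 1/λmax(AᴴA)`
have generalized-gradient norms tending to zero. -/
theorem wf_grad_norm_tendsto_zero
    {M N : ℕ} (A : Matrix (Fin M) (Fin N) ℂ) (b : Fin M → ℝ) (hb : ∀ m, 0 ≤ b m)
    (hpos : 0 < lamMax A)
    (fhat : Fin N → ℂ) (hmin : ∀ g, ampLoss A b fhat ≤ ampLoss A b g)
    (f : ℕ → Fin N → ℂ)
    (hiter : ∀ τ, f (τ + 1) = f τ - (1 / lamMax A) • wGrad A b (f τ)) :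
    Filter.Tendsto (fun τ => norm2 (wGrad A b (f τ))) Filter.atTop (nhds 0) :=
  wf_grad_norm_tendsto_zero_general A b hb hpos f hiter

end AWF
end
end

section
/- For every f ∈ ℂ^N, one generalized-gradient step with the fixed step size μ̄ = 1/λmax(A^H A) decreases the amplitude loss: L(f − μ̄·G(f)) ≤ L(f) − μ̄·‖G(f)‖₂², where λmax(A^H A) is assumed positive. -/
open scoped BigOperators
open Matrix

noncomputable section

/-!
Write `r = Af − b ⊙ sgn(Af)`, so that `G(f) = Aᴴ r`. Freezing the phases at `Af` gives a quadratic
surrogate of `L` around `f`: coordinatewise, the reverse triangle inequality (and `b ≥ 0` where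
`(Af)_m = 0`) bounds the increment `L(f − d) − L(f)` by `‖r − Ad‖² − ‖r‖²`. For `d = μ̄ G(f)` this is
`−2μ̄‖G‖² + μ̄²‖AG‖²`, and the Rayleigh bound `‖AG‖² ≤ λmax ‖G‖²` makes it at most `−μ̄‖G‖²`.
-/

open ComplexOrder in
theorem Matrix.IsHermitian.re_star_dotProduct_mulVec_le {𝕜 n : Type*} [RCLike 𝕜] [Fintype n]
    [DecidableEq n] {B : Matrix n n 𝕜} (hB : B.IsHermitian) (x : n → 𝕜) :
    RCLike.re (star x ⬝ᵥ B *ᵥ x) ≤ (⨆ i, hB.eigenvalues i) * RCLike.re (star x ⬝ᵥ x) := by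
  set c := ⨆ i, hB.eigenvalues i
  have hpsd : (algebraMap 𝕜 (Matrix n n 𝕜) c - B).PosSemidef := by
    refine posSemidef_iff_isHermitian_and_spectrum_nonneg.mpr ⟨?_, ?_⟩
    · exact (IsSelfAdjoint.algebraMap _ (RCLike.conj_ofReal c)).sub hB
    · rw [← spectrum.singleton_sub_eq, hB.spectrum_eq_image_range]
      rintro _ ⟨_, rfl, _, ⟨_, ⟨i, rfl⟩, rfl⟩, rfl⟩
      simpa using le_ciSup (Set.finite_range hB.eigenvalues).bddAbove i
  simpa [sub_mulVec, dotProduct_sub, Algebra.algebraMap_eq_smul_one, smul_mulVec,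
    dotProduct_smul, RCLike.smul_re] using hpsd.re_dotProduct_nonneg x

namespace AWF

section

variable {M N : ℕ} (A : Matrix (Fin M) (Fin N) ℂ)

theorem norm2_sq {n : ℕ} (v : Fin n → ℂ) : norm2 v ^ 2 = ∑ i, ‖v i‖ ^ 2 :=
  Real.sq_sqrt (Finset.sum_nonneg fun _ _ => sq_nonneg _)

theorem norm2_sq_eq_re_star_dotProduct {n : ℕ} (v : Fin n → ℂ) :
    norm2 v ^ 2 = (star v ⬝ᵥ v).re := by
  simp [norm2_sq, dotProduct, Complex.re_sum, ← Complex.normSq_eq_norm_sq, Complex.normSq_apply]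

theorem norm2_mulVec_sq_le (x : Fin N → ℂ) :
    norm2 (A *ᵥ x) ^ 2 ≤ lamMax A * norm2 x ^ 2 := by
  have h := (isHermitian_conjTranspose_mul_self A).re_star_dotProduct_mulVec_le x
  rw [← mulVec_mulVec, dotProduct_mulVec, ← star_mulVec] at h
  rwa [RCLike.re_to_complex, RCLike.re_to_complex, ← norm2_sq_eq_re_star_dotProduct,
    ← norm2_sq_eq_re_star_dotProduct] at h

theorem norm2_sub_smul_sq {n : ℕ} (r c : Fin n → ℂ) (μ : ℝ) :
    norm2 (r - μ • c) ^ 2 = norm2 r ^ 2 - 2 * μ * (star r ⬝ᵥ c).re + μ ^ 2 * norm2 c ^ 2 := by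
  simp only [norm2_sq, Pi.sub_apply, Pi.smul_apply, @norm_sub_sq ℂ ℂ, inner_smul_right_eq_smul,
    norm_smul]
  rw [Finset.sum_add_distrib, Finset.sum_sub_distrib, dotProduct, Complex.re_sum, Finset.mul_sum,
    Finset.mul_sum]
  simp only [mul_pow, Real.norm_eq_abs, sq_abs, RCLike.smul_re, RCLike.inner_apply, mul_assoc,
    RCLike.re_to_complex, Pi.star_apply, Complex.star_def, mul_comm (c _)]

theorem norm2_sub_smul_mulVec_conjTranspose_sq_le (r : Fin M → ℂ) :
    norm2 (r - (1 / lamMax A) • A *ᵥ Aᴴ *ᵥ r) ^ 2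
      ≤ norm2 r ^ 2 - 1 / lamMax A * norm2 (Aᴴ *ᵥ r) ^ 2 := by
  set μ := 1 / lamMax A
  set g := Aᴴ *ᵥ r
  have hcross : (star r ⬝ᵥ A *ᵥ g).re = norm2 g ^ 2 := by
    rw [norm2_sq_eq_re_star_dotProduct, dotProduct_mulVec, star_mulVec, conjTranspose_conjTranspose]
  have hμ : μ ^ 2 * lamMax A = μ := by
    simpa [μ, one_div, sq] using mul_self_mul_inv (lamMax A)⁻¹
  calc norm2 (r - μ • A *ᵥ g) ^ 2
        = norm2 r ^ 2 - 2 * μ * norm2 g ^ 2 + μ ^ 2 * norm2 (A *ᵥ g) ^ 2 := by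
        rw [norm2_sub_smul_sq, hcross]
    _ ≤ norm2 r ^ 2 - 2 * μ * norm2 g ^ 2 + μ ^ 2 * (lamMax A * norm2 g ^ 2) := by
        gcongr
        exact norm2_mulVec_sq_le A g
    _ = norm2 r ^ 2 - μ * norm2 g ^ 2 := by
        rw [← mul_assoc, hμ]; ring

theorem norm_mul_csgn (z : ℂ) : (‖z‖ : ℂ) * csgn z = z := by
  by_cases hz : z = 0
  · simp [hz, csgn]
  · simp [csgn, hz, mul_div_cancel₀]

theorem norm_csgn {z : ℂ} (hz : z ≠ 0) : ‖csgn z‖ = 1 := by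
  simp [csgn, hz]

theorem sq_sub_norm_sub_sub_sq_le {b : ℝ} (hb : 0 ≤ b) (y d : ℂ) :
    (b - ‖y - d‖) ^ 2 - (b - ‖y‖) ^ 2 ≤ ‖y - b * csgn y - d‖ ^ 2 - ‖y - b * csgn y‖ ^ 2 := by
  by_cases hy : y = 0
  · simp only [hy, csgn, if_true, mul_zero, sub_zero, zero_sub, norm_neg, norm_zero]
    nlinarith [norm_nonneg d]
  have hres : ‖y - b * csgn y‖ = |‖y‖ - b| := by
    nth_rw 1 [← norm_mul_csgn y]
    rw [← sub_mul, norm_mul, norm_csgn hy, mul_one, ← Complex.ofReal_sub, Complex.norm_real,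
      Real.norm_eq_abs]
  have htri : |b - ‖y - d‖| ≤ ‖y - b * csgn y - d‖ := by
    have h := abs_norm_sub_norm_le (y - d) (b * csgn y)
    rwa [norm_mul, norm_csgn hy, Complex.norm_real, Real.norm_eq_abs, abs_of_nonneg hb, mul_one,
      abs_sub_comm, sub_right_comm] at h
  rw [hres, sq_abs, ← sq_abs (b - ‖y - d‖)]
  nlinarith [pow_le_pow_left₀ (abs_nonneg _) htri 2]

def residual (b : Fin M → ℝ) (f : Fin N → ℂ) : Fin M → ℂ :=
  fun m => (A *ᵥ f) m - (b m : ℂ) * csgn ((A *ᵥ f) m)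

theorem wGrad_eq_conjTranspose_mulVec_residual (b : Fin M → ℝ) (f : Fin N → ℂ) :
    wGrad A b f = Aᴴ *ᵥ residual A b f :=
  rfl

theorem ampLoss_sub_le {b : Fin M → ℝ} (hb : ∀ m, 0 ≤ b m) (f d : Fin N → ℂ) :
    ampLoss A b (f - d) - ampLoss A b f
      ≤ norm2 (residual A b f - A *ᵥ d) ^ 2 - norm2 (residual A b f) ^ 2 := by
  simp only [ampLoss, norm2_sq, ← Finset.sum_sub_distrib, mulVec_sub, residual, Pi.sub_apply]
  exact Finset.sum_le_sum fun m _ => sq_sub_norm_sub_sub_sq_le (hb m) _ _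

end

theorem ampLoss_descent_step_general
    {M N : ℕ} (A : Matrix (Fin M) (Fin N) ℂ) (b : Fin M → ℝ) (hb : ∀ m, 0 ≤ b m)
    (f : Fin N → ℂ) :
    ampLoss A b (f - (1 / lamMax A) • wGrad A b f)
      ≤ ampLoss A b f - (1 / lamMax A) * norm2 (wGrad A b f) ^ 2 := by
  have hmaj := ampLoss_sub_le A hb f ((1 / lamMax A) • wGrad A b f)
  have hdesc := norm2_sub_smul_mulVec_conjTranspose_sq_le A (residual A b f)
  rw [wGrad_eq_conjTranspose_mulVec_residual] at hmaj ⊢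
  rw [mulVec_smul] at hmaj
  linarith

/-- One generalized-gradient step with step size `μ̄ = 1/λmax(AᴴA)`
decreases the amplitude loss: `L(f − μ̄ G(f)) ≤ L(f) − μ̄ ‖G(f)‖₂²`. -/
theorem ampLoss_descent_step
    {M N : ℕ} (A : Matrix (Fin M) (Fin N) ℂ) (b : Fin M → ℝ) (hb : ∀ m, 0 ≤ b m)
    (hpos : 0 < lamMax A) (f : Fin N → ℂ) :
    ampLoss A b (f - (1 / lamMax A) • wGrad A b f)
      ≤ ampLoss A b f - (1 / lamMax A) * norm2 (wGrad A b f) ^ 2 :=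
  ampLoss_descent_step_general A b hb f

end AWF
end
end

section
/- Under the ptychographic structure, the largest eigenvalue of A^H A equals the maximum total illumination intensity: λmax(A^H A) = α · max_{1 ≤ n ≤ N} Σ_{k=1}^K |(p_k)_n|². Equivalently, the squared operator norm of A equals α times the maximum entry of the vector Σ_{k=1}^K |p_k| ⊙ |p_k|. -/
/-!
`AᴴA = ∑ₖ diag(p_k)ᴴ S_kᴴ (FᴴF) S_k diag(p_k) = α ∑ₖ diag(p_k)ᴴ S_kᴴ S_k diag(p_k)`. Since `e_k` is
injective and its image contains the support of `p_k`, deleting the rows of `diag(p_k)` outside that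
image does not change its Gram matrix, so `AᴴA` is the diagonal matrix `α ∑ₖ |p_k|²`, whose
eigenvalues are its diagonal entries.
-/

open scoped BigOperators
open Matrix

noncomputable section

namespace AWF

open Finset

section Gram

variable {κ ι ℓ n R : Type*}

theorem conjTranspose_mul_self_eq_sum_blocks [Fintype κ] [Fintype ι]
    [NonUnitalNonAssocSemiring R] [Star R]
    (A : Matrix (κ × ι) n R) (B : κ → Matrix ι n R) (hA : ∀ k i j, A (k, i) j = B k i j) :
    Aᴴ * A = ∑ k, (B k)ᴴ * B k := by
  ext j j'
  simp only [mul_apply, conjTranspose_apply, Matrix.sum_apply, Fintype.sum_prod_type, hA]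

theorem conjTranspose_mul_self_mul_eq_smul [Fintype ι] [Fintype ℓ] [DecidableEq ℓ]
    [CommSemiring R] [StarRing R]
    {F : Matrix ι ℓ R} {c : R} (hF : Fᴴ * F = c • 1) (B : Matrix ℓ n R) :
    (F * B)ᴴ * (F * B) = c • (Bᴴ * B) := by
  rw [conjTranspose_mul, Matrix.mul_assoc, ← Matrix.mul_assoc Fᴴ, hF, Matrix.smul_mul,
    Matrix.one_mul, Matrix.mul_smul]

theorem conjTranspose_mul_self_submatrix_of_injective [Fintype ℓ] [Fintype n]
    [NonUnitalNonAssocSemiring R] [Star R] {M : Matrix n ι R} {e : ℓ → n} (he : Function.Injective e)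
    (hM : ∀ i ∉ Set.range e, M i = 0) :
    (M.submatrix e id)ᴴ * M.submatrix e id = Mᴴ * M := by
  ext j j'
  simp only [mul_apply, conjTranspose_apply, submatrix_apply, id]
  exact Fintype.sum_of_injective e he _ _ (fun i hi => by simp [hM i hi]) fun _ => rfl

end Gram

theorem conjTranspose_diagonal_mul_diagonal {𝕜 n : Type*} [RCLike 𝕜] [Fintype n] [DecidableEq n]
    (p : n → 𝕜) : (diagonal p)ᴴ * diagonal p = diagonal fun i => ((‖p i‖ ^ 2 : ℝ) : 𝕜) := by
  rw [diagonal_conjTranspose, diagonal_mul_diagonal]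
  congr 1
  ext i
  simp [RCLike.conj_mul]

theorem sup'_eigenvalues_of_eq_diagonal {𝕜 n : Type*} [RCLike 𝕜] [Fintype n] [DecidableEq n]
    [Nonempty n] {A : Matrix n n 𝕜} (hA : A.IsHermitian) {d : n → ℝ}
    (hd : A = diagonal fun i => (d i : 𝕜)) :
    univ.sup' univ_nonempty hA.eigenvalues = univ.sup' univ_nonempty d := by
  have hrange : Set.range hA.eigenvalues = Set.range d := by
    rw [← hA.spectrum_real_eq_range_eigenvalues, hd]
    ext r
    rw [← spectrum.algebraMap_mem_iff 𝕜, spectrum_diagonal]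
    simp [eq_comm]
  simp only [sup'_univ_eq_ciSup, iSup, hrange]

/-- Under the ptychographic structure, the largest eigenvalue of `AᴴA`
equals `α · max_n ∑_k |(p_k)_n|²`, the maximum total illumination intensity. -/
theorem ptycho_lamMax_eq_max_illumination
    {K m ℓ N : ℕ} [NeZero N]
    (p : Fin K → Fin N → ℂ) (F : Matrix (Fin m) (Fin ℓ) ℂ)
    (α : ℝ) (hα : 0 < α)
    (hF : Fᴴ * F = (α : ℂ) • (1 : Matrix (Fin ℓ) (Fin ℓ) ℂ))
    (e : Fin K → Fin ℓ → Fin N) (he : ∀ k, Function.Injective (e k))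
    (hsupp : ∀ k n, p k n ≠ 0 → ∃ j, e k j = n)
    (A : Matrix (Fin K × Fin m) (Fin N) ℂ)
    (hA : ∀ k i n, A (k, i) n = (∑ j, if e k j = n then F i j else 0) * p k n) :
    Finset.univ.sup' Finset.univ_nonempty
        (fun i => (Matrix.isHermitian_conjTranspose_mul_self A).eigenvalues i)
      = α * Finset.univ.sup' Finset.univ_nonempty
          (fun n => ∑ k, ‖p k n‖ ^ 2) := by
  -- `S_k * diag(p_k)` is `diag(p_k)` with its rows selected by `e k`.
  have hblock : ∀ k i n, A (k, i) n = (F * (diagonal (p k)).submatrix (e k) id) i n := by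
    intro k i n
    simp only [hA, mul_apply, submatrix_apply, id, diagonal_apply, Finset.sum_mul, ite_mul,
      zero_mul, mul_ite, mul_zero]
    exact Finset.sum_congr rfl fun j _ => by split_ifs with h <;> simp [h]
  have hrows : ∀ k, ∀ n ∉ Set.range (e k), diagonal (p k) n = 0 := by
    intro k n hn
    have hpn : p k n = 0 := not_not.mp ((hsupp k n).mt hn)
    ext n'
    simp [diagonal_apply, hpn]
  have hgram : Aᴴ * A = diagonal fun n => ((α * ∑ k, ‖p k n‖ ^ 2 : ℝ) : ℂ) := by
    rw [conjTranspose_mul_self_eq_sum_blocks A _ hblock]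
    simp_rw [conjTranspose_mul_self_mul_eq_smul hF,
      conjTranspose_mul_self_submatrix_of_injective (he _) (hrows _),
      conjTranspose_diagonal_mul_diagonal]
    ext n n'
    simp [Matrix.sum_apply, diagonal_apply, Finset.mul_sum]
  rw [sup'_eigenvalues_of_eq_diagonal (d := fun n => α * ∑ k, ‖p k n‖ ^ 2) _ hgram,
    Finset.mul₀_sup' hα.le]

end AWF
end
end
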